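/- Let m > 0. On ℝ_u × ℝ_R, let ĝ be the 2×2 symmetric matrix-valued function with entries ĝ₁₁(u,R) = R²(1−2mR), ĝ₁₂(u,R) = ĝ₂₁(u,R) = −1, ĝ₂₂(u,R) = 0 (the (u,R)-block of the rescaled Schwarzschild metric ĝ = R²(1−2mR) du² − 2 du dR − dω²), and let T(u,R) = (T¹, T²) = (u², −2(1+uR)). Then the Lie derivative components (L_T ĝ)_{ab} = Σ_c [ T^c ∂_c ĝ_{ab} + ĝ_{cb} ∂_a T^c + ĝ_{ac} ∂_b T^c ] satisfy, for all (u,R): (L_T ĝ)₁₁(u,R) = 4mR²(3 + uR), and (L_T ĝ)₁₂ = (L_T ĝ)₂₁ = (L_T ĝ)₂₂ = 0. That is, the Killing form of the Morawetz vector field T for the rescaled Schwarzschild metric is the multiple 4mR²(3+uR) of du², which decays like R² at null infinity R = 0. -/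
import Mathlib


/-- Partial derivative of a function of two real variables `(u, R)` in the
direction of coordinate `i` (`0` is `u`, `1` is `R`). -/
noncomputable def pd (i : Fin 2) (f : ℝ → ℝ → ℝ) (u R : ℝ) : ℝ :=
  if i = 0 then deriv (fun s => f s R) u else deriv (fun s => f u s) R

/-- The `(u,R)`-block of the rescaled Schwarzschild metric
`ĝ = R²(1−2mR) du² − 2 du dR − dω²`. -/
noncomputable def gSchw (m : ℝ) : Fin 2 → Fin 2 → ℝ → ℝ → ℝ :=
  ![![fun _ R => R ^ 2 * (1 - 2 * m * R), fun _ _ => -1], ![fun _ _ => -1, fun _ _ => 0]]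

/-- The Morawetz vector field `T = u² ∂_u − 2(1+uR) ∂_R` in coordinates `(u, R)`. -/
noncomputable def morawetz : Fin 2 → ℝ → ℝ → ℝ :=
  ![fun u _ => u ^ 2, fun u R => -2 * (1 + u * R)]

/-- The Lie derivative `(L_T g)_{ab} = T^c ∂_c g_{ab} + g_{cb} ∂_a T^c + g_{ac} ∂_b T^c`. -/
noncomputable def lieDeriv (T : Fin 2 → ℝ → ℝ → ℝ) (g : Fin 2 → Fin 2 → ℝ → ℝ → ℝ)
    (a b : Fin 2) (u R : ℝ) : ℝ :=
  ∑ c : Fin 2,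
    (T c u R * pd c (g a b) u R + g c b u R * pd a (T c) u R + g a c u R * pd b (T c) u R)

theorem stmt_7 (m : ℝ) (hm : 0 < m) :
    ∀ u R : ℝ,
      lieDeriv morawetz (gSchw m) 0 0 u R = 4 * m * R ^ 2 * (3 + u * R) ∧
      lieDeriv morawetz (gSchw m) 0 1 u R = 0 ∧
      lieDeriv morawetz (gSchw m) 1 0 u R = 0 ∧
      lieDeriv morawetz (gSchw m) 1 1 u R = 0 := by
  intro u R
  have h : deriv (fun s : ℝ => s ^ 2 * (1 - 2 * m * s)) R = 2 * R - 6 * m * R ^ 2 := by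
    have h' : HasDerivAt (fun s : ℝ => s ^ 2 * (1 - 2 * m * s))
        (2 * R ^ 1 * (1 - 2 * m * R) + R ^ 2 * (0 - 2 * m * 1)) R :=
      (hasDerivAt_pow 2 R).mul ((hasDerivAt_const R 1).sub ((hasDerivAt_id R).const_mul (2 * m)))
    rw [h'.deriv]; ring
  have h2 : deriv (HMul.hMul u : ℝ → ℝ) R = u := by
    simpa using ((hasDerivAt_id R).const_mul u).deriv
  refine ⟨?_, ?_, ?_, ?_⟩ <;>
    simp only [lieDeriv, pd, gSchw, morawetz, Fin.sum_univ_two, Matrix.cons_val_zero,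
      Matrix.cons_val_one, Matrix.head_cons] <;>
    simp only [h, h2, deriv_const', deriv_pow] <;> norm_num [h2] <;> ring
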